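/- arXiv:1902.02193 — 13 statements merged into one kernel-verified Lean document; each statement's English description precedes it below -/
import Mathlib

section
/- Let H be a complex Hilbert space and A a bounded linear operator on H satisfying A*A = A². Then A is self-adjoint. -/
open ContinuousLinearMap Complex

variable {H : Type*} [NormedAddCommGroup H] [InnerProductSpace ℂ H] [CompleteSpace H]

theorem stmt0 (A : H →L[ℂ] H) (h : adjoint A * A = A * A) : IsSelfAdjoint A := by
  rw [← star_eq_adjoint] at h
  -- star both sides: star A * star A = star A * A
  have h2 : star A * star A = star A * A := by
    have := congrArg star h
    simpa [star_mul] using this.symm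
  set d := A - star A with hd
  have hsd : star A * d = 0 := by
    simp [hd, mul_sub, h2]
  have hkey : star d * d = d * star A := by
    have hstar : star d = star A - A := by simp [hd]
    calc star d * d = star A * d - A * d := by rw [hstar, sub_mul]
      _ = -(A * d) := by rw [hsd, zero_sub]
      _ = A * star A - A * A := by rw [hd, mul_sub, neg_sub]
      _ = A * star A - star A * A := by rw [h]
      _ = A * star A - star A * star A := by rw [h2]
      _ = d * star A := by rw [hd, sub_mul]
  have hsq : (star d * d) * (star d * d) = 0 := by
    calc (star d * d) * (star d * d) = (d * star A) * (d * star A) := by rw [hkey]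
      _ = d * (star A * d) * star A := by rw [mul_assoc, mul_assoc, mul_assoc]
      _ = 0 := by rw [hsd]; simp
  have hdd : star d * d = 0 := by
    have hsa : star (star d * d) = star d * d := by simp [star_mul, mul_assoc]
    have hn : ‖star d * d‖ * ‖star d * d‖ = 0 := by
      rw [← CStarRing.norm_star_mul_self, hsa, hsq, norm_zero]
    have := mul_self_eq_zero.mp hn
    exact norm_eq_zero.mp this
  have hd0 : d = 0 := by
    have hn : ‖d‖ * ‖d‖ = 0 := by rw [← CStarRing.norm_star_mul_self, hdd, norm_zero]
    exact norm_eq_zero.mp (mul_self_eq_zero.mp hn)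
  have : A = star A := by
    have := sub_eq_zero.mp (hd ▸ hd0)
    exact this
  exact this.symm
end

section
/- Let H be a complex Hilbert space, A ∈ B(H), and n ≥ 2 an integer such that Aⁿ = A*A. Then A^(n-1) = A*. -/
/-!
Since `A` commutes with `Aⁿ = A†A`, so does `A†`, hence
`(A†)ⁿ⁻¹ Aⁿ⁻¹ = (A†A)ⁿ⁻¹ = A · Aⁿ⁻¹ (A†A)ⁿ⁻²`. For `z ∈ ker A†` this gives
`‖Aⁿ⁻¹ z‖² = ⟪A† z, Aⁿ⁻¹ (A†A)ⁿ⁻² z⟫ = 0`, so `Aⁿ⁻¹ - A†` vanishes on `ker A†`. It also vanishes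
on the range of `A`, because `(Aⁿ⁻¹ - A†) A = Aⁿ - A†A = 0`, hence on its closure
`(ker A†)ᗮ`, and therefore everywhere.
-/

theorem Commute.star_pow_mul_pow {R : Type*} [Monoid R] [StarMul R] {a : R}
    (ha : Commute a (star a * a)) (k : ℕ) : star a ^ k * a ^ k = (star a * a) ^ k := by
  have hstar : Commute (star a) (star a * a) := by simpa using ha.star_star
  induction k with
  | zero => simp
  | succ k ih =>
    calc star a ^ (k + 1) * a ^ (k + 1) = star a * (star a ^ k * a ^ k) * a := by
          rw [pow_succ' (star a), pow_succ a]; simp only [mul_assoc]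
      _ = (star a * a) ^ k * (star a * a) := by rw [ih, (hstar.pow_right k).eq, mul_assoc]
      _ = (star a * a) ^ (k + 1) := (pow_succ _ _).symm

namespace ContinuousLinearMap

variable {𝕜 E F : Type*} [RCLike 𝕜]
  [NormedAddCommGroup E] [InnerProductSpace 𝕜 E] [CompleteSpace E]
  [NormedAddCommGroup F] [InnerProductSpace 𝕜 F] [CompleteSpace F]

theorem apply_eq_zero_of_adjoint_comp_self_eq_comp {G : Type*} [NormedAddCommGroup G]
    [InnerProductSpace 𝕜 G] [CompleteSpace G] {T : F →L[𝕜] G} {A : E →L[𝕜] F}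
    {X : F →L[𝕜] E} (hT : adjoint T ∘L T = A ∘L X) {z : F} (hz : adjoint A z = 0) :
    T z = 0 := by
  have : ‖T z‖ ^ 2 = 0 := by
    rw [apply_norm_sq_eq_inner_adjoint_right, hT, comp_apply, ← adjoint_inner_left, hz,
      inner_zero_left, map_zero]
  simpa using this

theorem eq_zero_of_comp_eq_zero_of_adjoint_apply {G : Type*} [NormedAddCommGroup G]
    [NormedSpace 𝕜 G] {D : F →L[𝕜] G} {A : E →L[𝕜] F}
    (hDA : D ∘L A = 0) (hD : ∀ z, adjoint A z = 0 → D z = 0) : D = 0 := by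
  have hK : (adjoint A).ker ≤ D.ker := fun z hz => hD z hz
  have hKperp : (adjoint A).kerᗮ ≤ D.ker := by
    rw [← orthogonal_range, Submodule.orthogonal_orthogonal_eq_closure]
    refine Submodule.topologicalClosure_minimal _ ?_ (isClosed_ker D)
    rintro _ ⟨x, rfl⟩
    exact congr($hDA x)
  have htop : D.ker = ⊤ := top_le_iff.mp <|
    Submodule.sup_orthogonal_of_hasOrthogonalProjection (K := (adjoint A).ker) ▸ sup_le hK hKperp
  ext x
  simpa using htop.ge (Submodule.mem_top (x := x))

end ContinuousLinearMap

open ContinuousLinearMap Complex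

variable {H : Type*} [NormedAddCommGroup H] [InnerProductSpace ℂ H] [CompleteSpace H]

theorem stmt1 (A : H →L[ℂ] H) (n : ℕ) (hn : 2 ≤ n) (h : A ^ n = adjoint A * A) :
    A ^ (n - 1) = adjoint A := by
  obtain ⟨m, rfl⟩ : ∃ m, n = m + 2 := ⟨n - 2, by omega⟩
  rw [← star_eq_adjoint] at h ⊢
  have hcomm : Commute A (star A * A) := h ▸ Commute.self_pow A _
  have hfactor :
      adjoint (A ^ (m + 1)) ∘L A ^ (m + 1) = A ∘L (A ^ (m + 1) * (star A * A) ^ m) := by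
    calc adjoint (A ^ (m + 1)) ∘L A ^ (m + 1) = (star A * A) ^ (m + 1) := by
          rw [← star_eq_adjoint, star_pow]
          exact hcomm.star_pow_mul_pow _
      _ = A ∘L (A ^ (m + 1) * (star A * A) ^ m) := by
          rw [pow_succ', ← h, pow_succ', mul_assoc]; rfl
  rw [show m + 2 - 1 = m + 1 by omega, ← sub_eq_zero]
  refine eq_zero_of_comp_eq_zero_of_adjoint_apply (A := A) ?_ fun z hz => ?_
  · change (A ^ (m + 1) - star A) * A = 0
    rw [sub_mul, ← pow_succ, h, sub_self]
  · rw [sub_apply, apply_eq_zero_of_adjoint_comp_self_eq_comp hfactor hz, star_eq_adjoint, hz,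
      sub_zero]
end

section
/- Let H be a complex Hilbert space, A ∈ B(H), and n ≥ 2 an integer such that Aⁿ = A*A. Then ker A* = ker A. -/
/-!
Taking adjoints gives `(A*)ⁿ = A*A`, whose kernel is `ker A`. Hence `ker A* ⊆ ker (A*)ⁿ = ker A = ker A**`.
An operator `B` with `ker B ⊆ ker B*` has `ker B² = ker B`: if `B²x = 0` then `B*Bx = 0`, so `Bx = 0`.
Its kernel powers therefore stabilise at once, and `ker A* = ker (A*)ⁿ = ker A`.
-/

open ContinuousLinearMap Complex

variable {H : Type*} [NormedAddCommGroup H] [InnerProductSpace ℂ H] [CompleteSpace H]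

theorem Module.End.ker_le_ker_pow_succ {R M : Type*} [Semiring R] [AddCommMonoid M] [Module R M]
    (f : Module.End R M) (k : ℕ) : LinearMap.ker f ≤ LinearMap.ker (f ^ (k + 1)) := by
  rw [pow_succ, Module.End.mul_eq_comp]
  exact LinearMap.ker_le_ker_comp f (f ^ k)

theorem ContinuousLinearMap.ker_pow_succ_eq_ker_of_ker_le_ker_adjoint {𝕜 E : Type*} [RCLike 𝕜]
    [NormedAddCommGroup E] [InnerProductSpace 𝕜 E] [CompleteSpace E] (B : E →L[𝕜] E)
    (hB : LinearMap.ker (B : E →ₗ[𝕜] E) ≤ LinearMap.ker (adjoint B : E →ₗ[𝕜] E)) (k : ℕ) :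
    LinearMap.ker ((B : E →ₗ[𝕜] E) ^ (k + 1)) = LinearMap.ker (B : E →ₗ[𝕜] E) := by
  have hsq : LinearMap.ker ((B : E →ₗ[𝕜] E) ^ 1) = LinearMap.ker ((B : E →ₗ[𝕜] E) ^ (1 + 1)) := by
    rw [pow_one]
    refine le_antisymm (Module.End.ker_le_ker_pow_succ _ 1) fun x hx ↦ ?_
    have hBx : B x ∈ LinearMap.ker (B : E →ₗ[𝕜] E) := by simpa [sq] using hx
    have hx' : x ∈ (adjoint B ∘L B).ker := hB hBx
    rwa [ker_adjoint_comp_self] at hx'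
  rw [add_comm, ← Module.End.ker_pow_constant hsq k, pow_one]

theorem stmt3 (A : H →L[ℂ] H) (n : ℕ) (hn : 2 ≤ n) (h : A ^ n = adjoint A * A) :
    LinearMap.ker (adjoint A : H →ₗ[ℂ] H) = LinearMap.ker (A : H →ₗ[ℂ] H) := by
  obtain ⟨m, rfl⟩ : ∃ m, n = m + 1 := ⟨n - 1, by omega⟩
  have h_adj : adjoint A ^ (m + 1) = adjoint A * A := by
    simpa only [star_pow, star_mul, star_eq_adjoint, adjoint_adjoint] using congrArg star h
  have hker_pow :
      LinearMap.ker ((adjoint A : H →ₗ[ℂ] H) ^ (m + 1)) = LinearMap.ker (A : H →ₗ[ℂ] H) := by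
    rw [← toLinearMap_pow, h_adj]
    exact ker_adjoint_comp_self A
  have hle : LinearMap.ker (adjoint A : H →ₗ[ℂ] H) ≤
      LinearMap.ker (adjoint (adjoint A) : H →ₗ[ℂ] H) := by
    rw [adjoint_adjoint, ← hker_pow]
    exact Module.End.ker_le_ker_pow_succ _ m
  rw [← (adjoint A).ker_pow_succ_eq_ker_of_ker_le_ker_adjoint hle m, hker_pow]
end

section
/- Let H be a complex Hilbert space, A ∈ B(H), and n ≥ 3 an integer such that Aⁿ = A*A. Then A is normal. -/
open ContinuousLinearMap Complex

/-!
Write `D = A⋆A - AA⋆`. Since `A⋆A = Aⁿ` commutes with `A`, we get `DA = 0`, hence `A⋆D = 0`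
by taking adjoints. From `A⋆A = A · Aⁿ⁻¹` one gets `‖Ax‖² = ⟪A⋆x, Aⁿ⁻¹x⟫`, so `ker A⋆ ⊆ ker A`
and therefore also `AD = 0`. Then `D² = A⋆(AD) - A(A⋆D) = 0`, and a self-adjoint element
with `D⋆D = 0` vanishes by the C⋆-identity.
-/

section CStarRing

variable {E : Type*} [NonUnitalNormedRing E] [StarRing E] [CStarRing E]

theorem isStarNormal_of_commute_star_mul_self {a : E} (hc : Commute (star a * a) a)
    (hann : ∀ b : E, star a * b = 0 → a * b = 0) : IsStarNormal a := by
  set d := star a * a - a * star a with hd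
  have hd_star : star d = d := by simp only [hd, star_sub, star_mul, star_star]
  have hda : d * a = 0 := by rw [hd, sub_mul, hc.eq, mul_assoc, sub_self]
  have hstar_ad : star a * d = 0 := by
    simpa only [star_mul, hd_star, star_zero] using congrArg star hda
  have had : a * d = 0 := hann d hstar_ad
  have hdd : star d * d = 0 := by
    rw [hd_star]
    nth_rewrite 1 [hd]
    rw [sub_mul, mul_assoc, mul_assoc, had, hstar_ad, mul_zero, mul_zero, sub_self]
  exact ⟨sub_eq_zero.mp ((CStarRing.star_mul_self_eq_zero_iff d).mp hdd)⟩

end CStarRing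

namespace ContinuousLinearMap

variable {𝕜 E : Type*} [RCLike 𝕜] [NormedAddCommGroup E] [InnerProductSpace 𝕜 E] [CompleteSpace E]

theorem apply_eq_zero_of_adjoint_apply_eq_zero {A B : E →L[𝕜] E} (hB : adjoint A * A = A * B)
    {x : E} (hx : adjoint A x = 0) : A x = 0 := by
  have : inner 𝕜 (A x) (A x) = 0 := calc
    inner 𝕜 (A x) (A x) = inner 𝕜 x ((adjoint A * A) x) := (adjoint_inner_right A x (A x)).symm
    _ = inner 𝕜 (adjoint A x) (B x) := by rw [hB, mul_apply_eq_comp, adjoint_inner_left]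
    _ = 0 := by rw [hx, inner_zero_left]
  exact inner_self_eq_zero.mp this

theorem mul_eq_zero_of_adjoint_mul_eq_zero {A B : E →L[𝕜] E} (hB : adjoint A * A = A * B)
    {D : E →L[𝕜] E} (hD : adjoint A * D = 0) : A * D = 0 := by
  ext x
  exact apply_eq_zero_of_adjoint_apply_eq_zero hB (by simpa using congr($hD x))

end ContinuousLinearMap

variable {H : Type*} [NormedAddCommGroup H] [InnerProductSpace ℂ H] [CompleteSpace H]

theorem stmt4 (A : H →L[ℂ] H) (n : ℕ) (hn : 3 ≤ n) (h : A ^ n = adjoint A * A) :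
    adjoint A * A = A * adjoint A := by
  obtain ⟨m, rfl⟩ : ∃ m, n = m + 1 := ⟨n - 1, by omega⟩
  have hc : Commute (star A * A) A := by
    rw [star_eq_adjoint, ← h]
    exact (Commute.refl A).pow_left _
  have hfactor : adjoint A * A = A * A ^ m := by rw [← h, pow_succ']
  have hnormal : IsStarNormal A := isStarNormal_of_commute_star_mul_self hc fun D hD =>
    mul_eq_zero_of_adjoint_mul_eq_zero hfactor (by rwa [← star_eq_adjoint])
  simpa only [star_eq_adjoint] using hnormal.star_comm_self.eq
end

section
/- Let H be a complex Hilbert space, A ∈ B(H) nonzero, and n ≥ 3 an integer such that Aⁿ = A*A. Then ‖A‖ = 1. -/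
open ContinuousLinearMap Complex

open ENNReal Filter Topology

variable {H : Type*} [NormedAddCommGroup H] [InnerProductSpace ℂ H] [CompleteSpace H]

lemma le_spectralRadius_of_mem {A : Type*} [NormedRing A] [NormedAlgebra ℂ A] {a : A} {z : ℂ}
    (hz : z ∈ spectrum ℂ a) : (‖z‖₊ : ℝ≥0∞) ≤ spectralRadius ℂ a :=
  le_iSup₂ (f := fun k (_ : k ∈ spectrum ℂ a) => (‖k‖₊ : ℝ≥0∞)) z hz

theorem stmt7 (A : H →L[ℂ] H) (hA : A ≠ 0) (n : ℕ) (hn : 3 ≤ n)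
    (h : A ^ n = adjoint A * A) : ‖A‖ = 1 := by
  have hH : Nontrivial H := by
    by_contra hc
    rw [not_nontrivial_iff_subsingleton] at hc
    exact hA (Subsingleton.elim _ _)
  have hstar : star A * A = A ^ n := by rw [star_eq_adjoint, h]
  -- key1 : star A * A ^ (m+1) = A ^ (n + m)
  have key1 : ∀ m : ℕ, star A * A ^ (m + 1) = A ^ (n + m) := by
    intro m
    rw [pow_succ', ← mul_assoc, hstar, ← pow_add]
  -- key2 : (star A)^k * A^k = A^(n*k)
  have key2 : ∀ k : ℕ, (star A) ^ k * A ^ k = A ^ (n * k) := by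
    intro k
    induction k with
    | zero => simp
    | succ k ih =>
      rw [pow_succ (star A), mul_assoc, key1 k, show n + k = k + n by ring, pow_add,
        ← mul_assoc, ih, ← pow_add]
      ring_nf
  -- norm identity
  have keynorm : ∀ k : ℕ, ‖A ^ (n * k)‖₊ = ‖A ^ k‖₊ ^ 2 := by
    intro k
    rw [← key2 k, ← star_pow, CStarRing.nnnorm_star_mul_self, sq]
  set ρ := spectralRadius ℂ A with hρ
  -- Gelfand for A^n equals ρ^2
  have hfun : (fun k : ℕ => (‖(A ^ n) ^ k‖₊ : ℝ≥0∞) ^ (1 / k : ℝ)) =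
      (fun x : ℝ≥0∞ => x ^ 2) ∘ fun k : ℕ => (‖A ^ k‖₊ : ℝ≥0∞) ^ (1 / k : ℝ) := by
    funext k
    rw [Function.comp_apply, ← pow_mul, keynorm k, ENNReal.coe_pow, ← rpow_natCast _ 2,
      ← ENNReal.rpow_mul, mul_comm, ENNReal.rpow_mul, rpow_natCast]
  have h2 : Tendsto (fun k : ℕ => (‖(A ^ n) ^ k‖₊ : ℝ≥0∞) ^ (1 / k : ℝ)) atTop
      (𝓝 (ρ ^ 2)) := by
    rw [hfun]
    exact ((ENNReal.continuous_pow 2).tendsto ρ).comp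
      (spectrum.pow_nnnorm_pow_one_div_tendsto_nhds_spectralRadius A)
  have hρ2 : spectralRadius ℂ (A ^ n) = ρ ^ 2 :=
    tendsto_nhds_unique (spectrum.pow_nnnorm_pow_one_div_tendsto_nhds_spectralRadius (A ^ n)) h2
  -- self-adjoint: spectralRadius (A^n) = ‖A‖₊^2
  have hsa : IsSelfAdjoint (A ^ n) := by rw [← hstar]; exact IsSelfAdjoint.star_mul_self A
  have hnorm : spectralRadius ℂ (A ^ n) = (‖A‖₊ : ℝ≥0∞) ^ 2 := by
    rw [hsa.spectralRadius_eq_nnnorm, ← hstar, CStarRing.nnnorm_star_mul_self, ENNReal.coe_mul, sq]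
  -- ρ = ‖A‖₊
  have hρeq : ρ = (‖A‖₊ : ℝ≥0∞) :=
    (ENNReal.pow_right_strictMono two_ne_zero).injective (by rw [← hρ2, hnorm])
  -- spectral mapping: spectralRadius (A^n) = ρ^n
  have hmap : spectralRadius ℂ (A ^ n) = ρ ^ n := by
    apply le_antisymm
    · obtain ⟨w, hw, hw2⟩ := spectrum.exists_nnnorm_eq_spectralRadius (A ^ n)
      rw [spectrum.map_pow] at hw
      obtain ⟨z, hz, rfl⟩ := hw
      rw [← hw2, nnnorm_pow, ENNReal.coe_pow]
      exact pow_le_pow_left' (le_spectralRadius_of_mem hz) n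
    · obtain ⟨z, hz, hz2⟩ := spectrum.exists_nnnorm_eq_spectralRadius A
      have hzn : z ^ n ∈ spectrum ℂ (A ^ n) := by
        rw [spectrum.map_pow]; exact ⟨z, hz, rfl⟩
      calc ρ ^ n = (‖z‖₊ : ℝ≥0∞) ^ n := by rw [hz2]
        _ = (‖z ^ n‖₊ : ℝ≥0∞) := by rw [nnnorm_pow, ENNReal.coe_pow]
        _ ≤ spectralRadius ℂ (A ^ n) := le_spectralRadius_of_mem hzn
  -- combine: ‖A‖^n = ‖A‖^2 in ℝ
  have hpow : (‖A‖₊ : ℝ≥0∞) ^ n = (‖A‖₊ : ℝ≥0∞) ^ 2 := by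
    rw [← hρeq, ← hmap, hρ2, hρeq]
  have hreal : ‖A‖ ^ n = ‖A‖ ^ 2 := by
    have := congrArg ENNReal.toReal hpow
    simpa [ENNReal.toReal_pow, coe_nnnorm] using this
  have hpos : 0 < ‖A‖ := norm_pos_iff.mpr hA
  rcases lt_trichotomy ‖A‖ 1 with hlt | heq | hgt
  · exfalso
    have : ‖A‖ ^ n < ‖A‖ ^ 2 := pow_lt_pow_right_of_lt_one₀ hpos hlt (by omega)
    linarith
  · exact heq
  · exfalso
    have : ‖A‖ ^ 2 < ‖A‖ ^ n := pow_lt_pow_right₀ hgt (by omega)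
    linarith
end

section
/- Let H be a complex Hilbert space and A ∈ B(H) satisfying AA* = A². Then A is self-adjoint. -/
open ContinuousLinearMap Complex

variable {H : Type*} [NormedAddCommGroup H] [InnerProductSpace ℂ H] [CompleteSpace H]

theorem stmt8 (A : H →L[ℂ] H) (h : A * adjoint A = A * A) : IsSelfAdjoint A := by
  rw [← star_eq_adjoint] at h
  rw [isSelfAdjoint_iff]
  -- take star of h : A * A* = A * A  gives A * A* = A* * A*
  have h2 : star A * star A = A * A := by
    have := congrArg star h
    simp only [star_mul, star_star] at this
    rw [← this, h]
  set B : H →L[ℂ] H := A - star A with hB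
  have hAB : A * B = 0 := by
    rw [hB, mul_sub, h, sub_self]
  have hBA : B * star A = 0 := by
    rw [hB, sub_mul, h, h2, sub_self]
  have hB3 : B * B * B = 0 := by
    have : B * B = B * A - B * star A := by rw [hB]; noncomm_ring
    rw [this, hBA, sub_zero, mul_assoc, hAB, mul_zero]
  have hBstar : star B = -B := by
    simp [hB, star_sub]
  have hBB : star (B * B) = B * B := by
    rw [star_mul, hBstar, neg_mul_neg]
  have hn1 : ‖B‖ * ‖B‖ = ‖B * B‖ := by
    rw [← CStarRing.norm_star_mul_self (x := B), hBstar, neg_mul, norm_neg]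
  have hn2 : ‖B * B‖ * ‖B * B‖ = 0 := by
    rw [← CStarRing.norm_star_mul_self (x := B * B), hBB]
    have : B * B * (B * B) = 0 := by
      rw [← mul_assoc, hB3, zero_mul]
    rw [this, norm_zero]
  have hBB0 : ‖B * B‖ = 0 := by
    nlinarith [norm_nonneg (B * B)]
  have hB0 : B = 0 := by
    have : ‖B‖ = 0 := by nlinarith [norm_nonneg B, hn1]
    simpa using this
  exact (sub_eq_zero.mp hB0).symm
end

section
/- Let H be a complex Hilbert space and B, C ∈ B(H) such that C*C = BC and B*B = CB. Then B = C*. -/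
open ContinuousLinearMap Complex

variable {H : Type*} [NormedAddCommGroup H] [InnerProductSpace ℂ H] [CompleteSpace H]

theorem stmt9 (B C : H →L[ℂ] H) (h1 : adjoint C * C = B * C) (h2 : adjoint B * B = C * B) :
    B = adjoint C := by
  have h1' : star C * C = B * C := by rwa [star_eq_adjoint]
  have h2' : star B * B = C * B := by rwa [star_eq_adjoint]
  set D := B - star C with hD
  have hDC : D * C = 0 := by rw [hD, sub_mul, h1', sub_self]
  have key : star B * star C = C * B := by
    calc star B * star C = star (C * B) := (star_mul _ _).symm
      _ = star (star B * B) := by rw [h2']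
      _ = star B * B := by rw [star_mul, star_star]
      _ = C * B := h2'
  have h3 : star D * D = -(C * D) := by
    have hsD : star D = star B - C := by rw [hD, star_sub, star_star]
    rw [hsD, sub_mul, mul_sub, mul_sub, h2', key]
    abel
  have hsq : (star D * D) * (star D * D) = 0 := by
    rw [h3, neg_mul_neg, mul_assoc C D (C * D), ← mul_assoc D C D, hDC, zero_mul,
      mul_zero]
  have hsa : star (star D * D) = star D * D := by rw [star_mul, star_star]
  have hn1 : ‖star D * D‖ = 0 := by
    have h := CStarRing.norm_star_mul_self (x := star D * D)
    rw [hsa, hsq, norm_zero] at h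
    exact (mul_self_eq_zero.mp h.symm)
  have hn2 : ‖D‖ = 0 := by
    have h := CStarRing.norm_star_mul_self (x := D)
    rw [hn1] at h
    exact mul_self_eq_zero.mp h.symm
  have hD0 : D = 0 := norm_eq_zero.mp hn2
  have : B - star C = 0 := hD0
  rw [← star_eq_adjoint]
  exact sub_eq_zero.mp this
end

section
/- Let H be a complex Hilbert space and A ∈ B(H) satisfying A*A² = A*AA*. Then A is self-adjoint. -/
open ContinuousLinearMap Complex

variable {H : Type*} [NormedAddCommGroup H] [InnerProductSpace ℂ H] [CompleteSpace H]

/-! The argument works in any C⋆-ring. Put `c = a - a⋆`, so that `c⋆ = -c` and the hypothesis reads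
`a⋆ a c = 0`. Then `(a c)⋆ (a c) = c⋆ (a⋆ a c) = 0`, so `a c = 0`, and taking adjoints `c a⋆ = 0`.
Hence `c³ = c (a - a⋆) c = c (a c) - (c a⋆) c = 0`. Finally a nilpotent skew-adjoint element vanishes:
`c²` is self-adjoint with `(c²)⋆ c² = c⁴ = 0`, so `c² = 0`, and then `c⋆ c = -c² = 0`. -/

section CStarRing

variable {E : Type*} [NonUnitalNormedRing E] [StarRing E] [CStarRing E]

lemma IsSelfAdjoint.eq_zero_of_mul_self_eq_zero {d : E} (hd : IsSelfAdjoint d) (h : d * d = 0) :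
    d = 0 := by
  rwa [← CStarRing.star_mul_self_eq_zero_iff, hd.star_eq]

lemma eq_zero_of_star_eq_neg_of_mul_self_eq_zero {c : E} (hc : star c = -c) (h : c * c = 0) :
    c = 0 := by
  rw [← CStarRing.star_mul_self_eq_zero_iff, hc, neg_mul, h, neg_zero]

lemma eq_zero_of_star_eq_neg_of_mul_self_mul_self_eq_zero {c : E} (hc : star c = -c)
    (h : c * c * c = 0) : c = 0 := by
  refine eq_zero_of_star_eq_neg_of_mul_self_eq_zero hc
    (IsSelfAdjoint.eq_zero_of_mul_self_eq_zero ?_ ?_)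
  · rw [IsSelfAdjoint, star_mul, hc, neg_mul_neg]
  · rw [← mul_assoc, h, zero_mul]

theorem isSelfAdjoint_of_star_mul_self_mul_eq_star_mul_self_mul_star {a : E}
    (h : star a * a * a = star a * a * star a) : IsSelfAdjoint a := by
  set c := a - star a with hc_def
  have hc : star c = -c := by rw [hc_def, star_sub, star_star, neg_sub]
  have haac : star a * a * c = 0 := by rw [hc_def, mul_sub, h, sub_self]
  have hac : a * c = 0 := by
    rw [← CStarRing.star_mul_self_eq_zero_iff, star_mul, mul_assoc, ← mul_assoc (star a),
      haac, mul_zero]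
  have hca : c * star a = 0 := by
    simpa only [star_mul, hc, neg_mul, star_zero, neg_eq_zero] using congrArg star hac
  have hccc : c * c * c = 0 :=
    calc c * c * c = c * (a - star a) * c := by rw [← hc_def]
      _ = c * (a * c) - c * star a * c := by noncomm_ring
      _ = 0 := by rw [hac, hca, mul_zero, zero_mul, sub_zero]
  have hc0 : c = 0 := eq_zero_of_star_eq_neg_of_mul_self_mul_self_eq_zero hc hccc
  exact (sub_eq_zero.mp hc0).symm

end CStarRing

theorem stmt11 (A : H →L[ℂ] H) (h : adjoint A * A * A = adjoint A * A * adjoint A) :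
    IsSelfAdjoint A := by
  rw [← star_eq_adjoint] at h
  exact isSelfAdjoint_of_star_mul_self_mul_eq_star_mul_self_mul_star h
end

section
/- Let H be a complex Hilbert space and A ∈ B(H) hyponormal with spectrum contained in the imaginary axis iℝ. Then A is skew-adjoint, i.e., A* = -A. -/
/-!
A hyponormal operator `T` satisfies `‖T y‖² ≤ ‖T (T y)‖ ‖y‖`, hence `‖T ^ n‖ = ‖T‖ ^ n`, and by
Gelfand's formula its norm equals its spectral radius. Hyponormality survives the real shifts
`A - s`, and `σ (A - s) ⊆ {i t - s : |t| ≤ ‖A‖}`, so `‖A - s‖² ≤ ‖A‖² + s²` for every real `s`.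
Expanding `‖(A - s) x‖²`, this says `-2 s Re ⟪A x, x⟫ ≤ ‖A‖² ‖x‖²` for all `s`, which forces
`Re ⟪A x, x⟫ = 0`. So `A* + A` is self-adjoint with vanishing quadratic form, i.e. `A* = -A`.
-/

open ContinuousLinearMap Complex
open scoped InnerProductSpace

variable {H : Type*} [NormedAddCommGroup H] [InnerProductSpace ℂ H] [CompleteSpace H]

lemma norm_pow_eq_pow_of_sq_le {R : Type*} [NormedRing R] [NormOneClass R] {a : R}
    (h : ∀ n : ℕ, ‖a ^ (n + 1)‖ ^ 2 ≤ ‖a ^ (n + 2)‖ * ‖a ^ n‖) (n : ℕ) :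
    ‖a ^ n‖ = ‖a‖ ^ n := by
  rcases (norm_nonneg a).eq_or_lt with ha | ha
  · rw [eq_comm, norm_eq_zero] at ha
    cases n <;> simp [ha]
  induction n using Nat.twoStepInduction with
  | zero => simp
  | one => simp
  | more k ih₀ ih₁ =>
    refine le_antisymm (norm_pow_le _ _) (le_of_mul_le_mul_right ?_ (pow_pos ha k))
    calc ‖a‖ ^ (k + 2) * ‖a‖ ^ k = ‖a ^ (k + 1)‖ ^ 2 := by rw [ih₁]; ring
      _ ≤ ‖a ^ (k + 2)‖ * ‖a‖ ^ k := ih₀ ▸ h k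

lemma spectralRadius_eq_nnnorm_of_norm_pow {A : Type*} [NormedRing A] [NormedAlgebra ℂ A]
    [CompleteSpace A] {a : A} (h : ∀ n : ℕ, ‖a ^ n‖ = ‖a‖ ^ n) :
    spectralRadius ℂ a = ‖a‖₊ := by
  refine tendsto_nhds_unique ((spectrum.pow_nnnorm_pow_one_div_tendsto_nhds_spectralRadius a).comp
    (Filter.tendsto_add_atTop_nat 1)) (tendsto_const_nhds.congr fun n => ?_)
  have hn : ‖a ^ (n + 1)‖₊ = ‖a‖₊ ^ (n + 1) := NNReal.eq (by simpa using h (n + 1))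
  rw [Function.comp_apply, hn, ENNReal.coe_pow, ← ENNReal.rpow_natCast, ← ENNReal.rpow_mul,
    mul_one_div_cancel (by positivity), ENNReal.rpow_one]

lemma exists_mem_spectrum_norm_eq_of_norm_pow {A : Type*} [NormedRing A] [NormedAlgebra ℂ A]
    [CompleteSpace A] [Nontrivial A] {a : A} (h : ∀ n : ℕ, ‖a ^ n‖ = ‖a‖ ^ n) :
    ∃ z ∈ spectrum ℂ a, ‖z‖ = ‖a‖ := by
  obtain ⟨z, hz, hza⟩ := spectrum.exists_nnnorm_eq_spectralRadius a
  rw [spectralRadius_eq_nnnorm_of_norm_pow h, ENNReal.coe_inj] at hza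
  exact ⟨z, hz, congrArg NNReal.toReal hza⟩

lemma eq_zero_of_forall_mul_le {a C : ℝ} (h : ∀ s : ℝ, s * a ≤ C) : a = 0 := by
  by_contra ha
  have := h ((C + 1) / a)
  rw [div_mul_cancel₀ _ ha] at this
  linarith

namespace ContinuousLinearMap

variable {𝕜 E : Type*} [RCLike 𝕜] [NormedAddCommGroup E] [InnerProductSpace 𝕜 E]

lemma opNorm_sq_le_of_forall_sq_le {F : Type*} [NormedAddCommGroup F] [NormedSpace 𝕜 F]
    {S : E →L[𝕜] F} {c : ℝ} (hc : 0 ≤ c)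
    (h : ∀ x, ‖S x‖ ^ 2 ≤ c * ‖x‖ ^ 2) : ‖S‖ ^ 2 ≤ c := by
  have hS : ‖S‖ ≤ √c := S.opNorm_le_bound (Real.sqrt_nonneg c) fun x =>
    (sq_le_sq₀ (norm_nonneg _) (by positivity)).1 (by rw [mul_pow, Real.sq_sqrt hc]; exact h x)
  simpa [Real.sq_sqrt hc] using pow_le_pow_left₀ (norm_nonneg S) hS 2

lemma re_inner_self_apply_eq_zero_of_norm_sub_sq_le {T : E →L[𝕜] E}
    (h : ∀ s : ℝ, ‖T - algebraMap 𝕜 (E →L[𝕜] E) s‖ ^ 2 ≤ ‖T‖ ^ 2 + s ^ 2) (x : E) :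
    RCLike.re ⟪T x, x⟫_𝕜 = 0 := by
  have hexpand (s : ℝ) : ‖(T - algebraMap 𝕜 (E →L[𝕜] E) s) x‖ ^ 2
      = ‖T x‖ ^ 2 - 2 * s * RCLike.re ⟪T x, x⟫_𝕜 + s ^ 2 * ‖x‖ ^ 2 := by
    rw [sub_apply, Algebra.algebraMap_eq_smul_one, smul_apply, one_apply_eq_self, @norm_sub_sq 𝕜,
      inner_smul_right, RCLike.re_ofReal_mul, norm_smul, RCLike.norm_ofReal, mul_pow, sq_abs]
    ring
  have hbound (s : ℝ) : ‖(T - algebraMap 𝕜 (E →L[𝕜] E) s) x‖ ^ 2 ≤ (‖T‖ ^ 2 + s ^ 2) * ‖x‖ ^ 2 :=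
    calc _ ≤ (‖T - algebraMap 𝕜 (E →L[𝕜] E) s‖ * ‖x‖) ^ 2 := by gcongr; exact le_opNorm _ _
      _ ≤ (‖T‖ ^ 2 + s ^ 2) * ‖x‖ ^ 2 := by rw [mul_pow]; gcongr; exact h s
  have := eq_zero_of_forall_mul_le (a := 2 * RCLike.re ⟪T x, x⟫_𝕜) (C := ‖T‖ ^ 2 * ‖x‖ ^ 2)
    fun s => by nlinarith [hexpand (-s), hbound (-s), sq_nonneg ‖T x‖]
  linarith

lemma adjoint_eq_neg_of_re_inner_self_eq_zero [CompleteSpace E] {T : E →L[𝕜] E}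
    (h : ∀ x, RCLike.re ⟪T x, x⟫_𝕜 = 0) : adjoint T = -T := by
  have hself : IsSelfAdjoint (adjoint T + T) := by
    simpa only [star_eq_adjoint] using IsSelfAdjoint.star_add_self T
  have hzero : ((adjoint T + T : E →L[𝕜] E) : E →ₗ[𝕜] E) = 0 :=
    hself.isSymmetric.inner_map_self_eq_zero.1 fun x => by
      rw [coe_coe, add_apply, inner_add_left, adjoint_inner_left, ← inner_conj_symm, add_comm,
        RCLike.add_conj, h x, RCLike.ofReal_zero, mul_zero]
  exact eq_neg_of_add_eq_zero_left (coe_injective hzero)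

variable [CompleteSpace E]

def IsHyponormal (T : E →L[𝕜] E) : Prop := ∀ x, ‖adjoint T x‖ ≤ ‖T x‖

namespace IsHyponormal

variable {T : E →L[𝕜] E}

lemma norm_apply_sq_le (hT : T.IsHyponormal) (y : E) : ‖T y‖ ^ 2 ≤ ‖T (T y)‖ * ‖y‖ :=
  calc ‖T y‖ ^ 2 = RCLike.re ⟪y, adjoint T (T y)⟫_𝕜 := by
        rw [adjoint_inner_right, inner_self_eq_norm_sq]
    _ ≤ ‖y‖ * ‖adjoint T (T y)‖ := (RCLike.re_le_norm _).trans (norm_inner_le_norm _ _)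
    _ ≤ ‖T (T y)‖ * ‖y‖ := by rw [mul_comm]; gcongr; exact hT _

lemma norm_pow_succ_sq_le (hT : T.IsHyponormal) (n : ℕ) :
    ‖T ^ (n + 1)‖ ^ 2 ≤ ‖T ^ (n + 2)‖ * ‖T ^ n‖ := by
  refine opNorm_sq_le_of_forall_sq_le (by positivity) fun x => ?_
  calc ‖(T ^ (n + 1)) x‖ ^ 2 ≤ ‖(T ^ (n + 2)) x‖ * ‖(T ^ n) x‖ := by
        simpa only [pow_succ' T, mul_apply_eq_comp] using hT.norm_apply_sq_le ((T ^ n) x)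
    _ ≤ (‖T ^ (n + 2)‖ * ‖x‖) * (‖T ^ n‖ * ‖x‖) :=
        mul_le_mul (le_opNorm _ _) (le_opNorm _ _) (norm_nonneg _) (by positivity)
    _ = ‖T ^ (n + 2)‖ * ‖T ^ n‖ * ‖x‖ ^ 2 := by ring

lemma norm_pow [Nontrivial E] (hT : T.IsHyponormal) (n : ℕ) : ‖T ^ n‖ = ‖T‖ ^ n :=
  norm_pow_eq_pow_of_sq_le hT.norm_pow_succ_sq_le n

lemma sub_algebraMap (hT : T.IsHyponormal) (z : 𝕜) :
    (T - algebraMap 𝕜 (E →L[𝕜] E) z).IsHyponormal := by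
  intro x
  have hre : RCLike.re ⟪adjoint T x, (starRingEnd 𝕜 z) • x⟫_𝕜 = RCLike.re ⟪T x, z • x⟫_𝕜 := by
    rw [inner_smul_right, inner_smul_right, adjoint_inner_left, ← inner_conj_symm (T x),
      ← RCLike.conj_re, map_mul, RCLike.conj_conj]
  have hsq : ‖adjoint T x - (starRingEnd 𝕜 z) • x‖ ^ 2 ≤ ‖T x - z • x‖ ^ 2 := by
    rw [@norm_sub_sq 𝕜, @norm_sub_sq 𝕜, hre, norm_smul, norm_smul, RCLike.norm_conj]
    gcongr
    exact hT x
  have hadj : adjoint (T - algebraMap 𝕜 (E →L[𝕜] E) z)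
      = adjoint T - algebraMap 𝕜 (E →L[𝕜] E) (starRingEnd 𝕜 z) := by
    rw [← star_eq_adjoint, ← star_eq_adjoint, star_sub, ← algebraMap_star_comm]; rfl
  rw [hadj]
  simpa [Algebra.algebraMap_eq_smul_one] using
    (sq_le_sq₀ (norm_nonneg _) (norm_nonneg _)).1 hsq

lemma exists_mem_spectrum_norm_eq [Nontrivial H] {T : H →L[ℂ] H} (hT : T.IsHyponormal) :
    ∃ z ∈ spectrum ℂ T, ‖z‖ = ‖T‖ :=
  exists_mem_spectrum_norm_eq_of_norm_pow hT.norm_pow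

lemma norm_sub_algebraMap_sq_le {A : H →L[ℂ] H} (hA : A.IsHyponormal)
    (hsp : ∀ z ∈ spectrum ℂ A, ∃ t : ℝ, z = t * I) (s : ℝ) :
    ‖A - algebraMap ℂ (H →L[ℂ] H) s‖ ^ 2 ≤ ‖A‖ ^ 2 + s ^ 2 := by
  rcases subsingleton_or_nontrivial H with _ | _
  · rw [Subsingleton.elim (A - _) 0, norm_zero, zero_pow two_ne_zero]
    positivity
  obtain ⟨z, hz, hz_norm⟩ := (hA.sub_algebraMap s).exists_mem_spectrum_norm_eq
  have hzs : z + s ∈ spectrum ℂ A := spectrum.add_mem_iff.2 (by rwa [neg_add_eq_sub])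
  obtain ⟨t, ht⟩ := hsp _ hzs
  have ht_le : |t| ≤ ‖A‖ := by
    simpa [ht] using spectrum.norm_le_norm_of_mem hzs
  have hz_sq : ‖z‖ ^ 2 = t ^ 2 + s ^ 2 := by
    rw [eq_sub_of_add_eq ht, sub_eq_neg_add, ← ofReal_neg, Complex.sq_norm, Complex.normSq_add_mul_I,
      neg_sq, add_comm]
  rw [← hz_norm, hz_sq]
  exact add_le_add_left (sq_le_sq' (neg_le_of_abs_le ht_le) (le_of_abs_le ht_le)) _

end IsHyponormal

end ContinuousLinearMap

theorem stmt14 (A : H →L[ℂ] H) (hhyp : ∀ x : H, ‖adjoint A x‖ ≤ ‖A x‖)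
    (hsp : ∀ z ∈ spectrum ℂ A, ∃ t : ℝ, z = t * Complex.I) :
    adjoint A = -A :=
  adjoint_eq_neg_of_re_inner_self_eq_zero <|
    re_inner_self_apply_eq_zero_of_norm_sub_sq_le <|
      IsHyponormal.norm_sub_algebraMap_sq_le (A := A) hhyp hsp
end

section
/- Let H be a complex Hilbert space and A ∈ B(H) satisfying A*A = -A². Then A is skew-adjoint, i.e., A* = -A. -/
open ContinuousLinearMap Complex

variable {H : Type*} [NormedAddCommGroup H] [InnerProductSpace ℂ H] [CompleteSpace H]

theorem stmt15 (A : H →L[ℂ] H) (h : adjoint A * A = -(A * A)) : adjoint A = -A := by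
  set C := adjoint A + A with hCdef
  have hCsa : star C = C := by
    simp [hCdef, star_eq_adjoint, adjoint_adjoint, add_comm]
  have hCA : C * A = 0 := by
    rw [hCdef, add_mul, h, neg_add_cancel]
  have hAC : adjoint A * C = 0 := by
    have := congrArg star hCA
    rwa [star_mul, star_zero, hCsa, star_eq_adjoint] at this
  have hC3 : C * C * C = 0 := by
    have e : C * C * C = C * (adjoint A * C) + (C * A) * C := by
      nth_rewrite 2 [hCdef]; noncomm_ring
    rw [e, hAC, hCA, mul_zero, zero_mul, add_zero]
  have hC4 : (C * C) * (C * C) = 0 := by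
    rw [← mul_assoc, hC3, zero_mul]
  have h2 : ‖C * C‖ = ‖C‖ * ‖C‖ := by
    calc ‖C * C‖ = ‖star C * C‖ := by rw [hCsa]
    _ = ‖C‖ * ‖C‖ := CStarRing.norm_star_mul_self
  have h4 : ‖C * C * (C * C)‖ = ‖C * C‖ * ‖C * C‖ := by
    have hsa2 : star (C * C) = C * C := by rw [star_mul, hCsa]
    calc ‖C * C * (C * C)‖ = ‖star (C * C) * (C * C)‖ := by rw [hsa2]
    _ = ‖C * C‖ * ‖C * C‖ := CStarRing.norm_star_mul_self
  have hnorm : ‖C‖ = 0 := by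
    have hp : ‖C‖ ^ 4 = 0 := by
      have e : ‖C‖ ^ 4 = ‖C * C‖ * ‖C * C‖ := by rw [h2]; ring
      rw [e, ← h4, hC4, norm_zero]
    exact pow_eq_zero_iff (by norm_num) |>.mp hp
  have hC0 : C = 0 := norm_eq_zero.mp hnorm
  have h0 : adjoint A + A = 0 := hC0
  exact eq_neg_of_add_eq_zero_left h0
end

section
/- Let H be a complex Hilbert space, A ∈ B(H) with A ≠ 0, and q a nonzero real number such that A*A = qA². Then q = 1 or q = -1. -/
open ContinuousLinearMap Complex

variable {H : Type*} [NormedAddCommGroup H] [InnerProductSpace ℂ H] [CompleteSpace H]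

theorem stmt16 (A : H →L[ℂ] H) (hA : A ≠ 0) (q : ℝ) (hq : q ≠ 0)
    (h : adjoint A * A = (q : ℂ) • (A * A)) : q = 1 ∨ q = -1 := by
  by_contra hc
  push_neg at hc
  obtain ⟨h1, h2⟩ := hc
  have hqC : (q : ℂ) ≠ 0 := by exact_mod_cast hq
  have hzero : A = 0 → False := hA
  -- taking adjoints of h
  have h' : adjoint A * A = (q : ℂ) • (adjoint A * adjoint A) := by
    have := congrArg star h
    simpa [star_smul, star_mul, star_eq_adjoint, adjoint_adjoint, Complex.star_def,
      Complex.conj_ofReal, mul_smul_comm, smul_mul_assoc] using this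
  have hsq : adjoint A * adjoint A = A * A := by
    have := h.symm.trans h'
    exact (smul_right_injective _ hqC this).symm
  -- derive A^3 = q^2 • A^3
  have key : A * A * A = ((q : ℂ) * q) • (A * A * A) := by
    calc A * A * A = (adjoint A * adjoint A) * A := by rw [hsq]
      _ = adjoint A * (adjoint A * A) := by rw [mul_assoc]
      _ = adjoint A * ((q : ℂ) • (A * A)) := by rw [h]
      _ = (q : ℂ) • (adjoint A * A * A) := by
          rw [mul_smul_comm, mul_assoc]
      _ = (q : ℂ) • (((q : ℂ) • (A * A)) * A) := by rw [h]
      _ = ((q : ℂ) * q) • (A * A * A) := by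
          rw [smul_mul_assoc, smul_smul]
  have hq2 : (q : ℂ) * q ≠ 1 := by
    intro hh
    have : q * q = 1 := by exact_mod_cast hh
    rcases mul_self_eq_one_iff.mp this with rfl | rfl
    · exact h1 rfl
    · exact h2 rfl
  have hA3 : A * A * A = 0 := by
    have : (1 - (q : ℂ) * q) • (A * A * A) = 0 := by
      rw [sub_smul, one_smul, key]
      simp [← key]
    have hne : (1 - (q : ℂ) * q) ≠ 0 := sub_ne_zero.mpr (Ne.symm hq2)
    exact (smul_eq_zero.mp this).resolve_left hne
  -- then A * A = 0
  have hA2 : A * A = 0 := by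
    have hcomp : adjoint (A * A) ∘L (A * A) = 0 := by
      have : adjoint (A * A) * (A * A) = adjoint A * adjoint A * A * A := by
        rw [← star_eq_adjoint, star_mul, star_eq_adjoint]; exact (mul_assoc _ _ _).symm
      rw [hsq] at this
      have h4 : A * A * A * A = 0 := by rw [hA3, zero_mul]
      have := this.trans h4
      exact this
    have := norm_adjoint_comp_self (A * A)
    rw [hcomp, norm_zero] at this
    have : ‖A * A‖ = 0 := by nlinarith [norm_nonneg (A * A)]
    exact norm_eq_zero.mp this
  -- then A = 0
  have : adjoint A ∘L A = 0 := by
    rw [show adjoint A ∘L A = adjoint A * A from rfl, h, hA2, smul_zero]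
  have hn := norm_adjoint_comp_self A
  rw [this, norm_zero] at hn
  exact hA (norm_eq_zero.mp (by nlinarith [norm_nonneg A]))
end

section
/- Let A be a closed, densely defined (possibly unbounded) linear operator on a complex Hilbert space H satisfying A*A = A² (equality of operators, including domains). Then A is self-adjoint. -/
/-!
Let `B = (1 + A⋆A)⁻¹` and `C = A B`. Von Neumann's argument (orthogonal decomposition along the
closed graph of `A`) makes them bounded, everywhere defined operators with `B = B⋆B + C⋆C`.
The hypothesis says that `A⋆` and `A` agree, domains included, on the range of `A`; it yields
`C x = B (A x)` on the domain of `A`, hence `B C = C B`, and `C - B⋆C = C⋆ - C⋆B`. In the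
C⋆-algebra of bounded operators these relations force `C⋆ = C`. Then every point `(x, A x)`
splits as `(B x, C x) + (x - B x, A x - C x)` with both summands in the graph of `A⋆`, and every
point `(y, z)` of the graph of `A⋆` as `(B y, C y) + (C z, z - B z)` in the graph of `A`.
-/

open LinearPMap

variable {H : Type*} [NormedAddCommGroup H] [InnerProductSpace ℂ H] [CompleteSpace H]

/-- Composition of two (possibly unbounded) partially defined operators, with the
natural domain \`{x ∈ D(f) : f x ∈ D(g)}\`. -/
noncomputable def LinearPMap.pcomp (g f : H →ₗ.[ℂ] H) : H →ₗ.[ℂ] H :=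
  g.comp (f.domRestrict ((g.domain.comap f.toFun).map f.domain.subtype))
    (fun x => by
      obtain ⟨hS, hD⟩ := x.2
      obtain ⟨y, hy, hyx⟩ := hS
      rw [LinearPMap.domRestrict_apply (y := y) hyx.symm]
      exact hy)

open scoped InnerProductSpace

theorem IsSelfAdjoint.of_eq_star_mul_self_add {R : Type*} [NonUnitalRing R] [StarRing R]
    {B C : R} (hB : B = star B * B + star C * C) : IsSelfAdjoint B := by
  rw [hB]
  exact (IsSelfAdjoint.star_mul_self B).add (IsSelfAdjoint.star_mul_self C)

section CStarRing

variable {R : Type*} [NonUnitalNormedRing R] [StarRing R] [CStarRing R] {B C : R}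

theorem mul_eq_zero_of_eq_star_mul_self_add (hB : B = star B * B + star C * C) {X : R}
    (hX : B * X = X) : C * X = 0 := by
  have hC : star C * C = B - star B * B := (sub_eq_of_eq_add' hB).symm
  rw [← CStarRing.star_mul_self_eq_zero_iff]
  calc star (C * X) * (C * X) = star X * (star C * C) * X := by simp only [star_mul, mul_assoc]
    _ = star X * (B * X) - star (B * X) * (B * X) := by rw [hC, star_mul]; noncomm_ring
    _ = 0 := by rw [hX, sub_self]

theorem isSelfAdjoint_of_eq_star_mul_self_add_of_commute (hB : B = star B * B + star C * C)
    (hBC : Commute B C) (hσ : C - star B * C = star C - star C * B) : IsSelfAdjoint C := by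
  have hBsa : star B = B := IsSelfAdjoint.of_eq_star_mul_self_add hB
  have hBC' : Commute B (star C) := by simpa [hBsa] using hBC.star_star
  -- `D = C - C⋆` takes values in the fixed space of `B`, on which `C` and `C⋆` vanish.
  set D := C - star C with hD
  have hBD : B * D = D := by
    rw [hBsa, ← hBC'.eq] at hσ
    rw [hD, mul_sub]
    exact (sub_eq_sub_iff_sub_eq_sub.1 hσ).symm
  have hCD : C * D = 0 := mul_eq_zero_of_eq_star_mul_self_add hB hBD
  have hCsD : C * (star C * D) = 0 := by
    refine mul_eq_zero_of_eq_star_mul_self_add hB ?_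
    rw [← mul_assoc, hBC'.eq, mul_assoc, hBD]
  have hsCD : star C * D = 0 := by
    rw [← CStarRing.star_mul_self_eq_zero_iff, star_mul, star_star, mul_assoc, hCsD, mul_zero]
  have hDD : star D * D = 0 := by
    rw [hD, star_sub, star_star, ← neg_sub, neg_mul, ← hD, sub_mul, hCD, hsCD, sub_zero,
      neg_zero]
  exact (sub_eq_zero.1 ((CStarRing.star_mul_self_eq_zero_iff D).1 hDD)).symm

end CStarRing

namespace LinearPMap

omit [CompleteSpace H] in
theorem mem_graph_pcomp_iff {g f : H →ₗ.[ℂ] H} {x z : H} :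
    (x, z) ∈ (g.pcomp f).graph ↔ ∃ y, (x, y) ∈ f.graph ∧ (y, z) ∈ g.graph := by
  constructor
  · rw [mem_graph_iff]
    rintro ⟨⟨_, ⟨⟨w, hwg, rfl⟩, -⟩⟩, rfl, rfl⟩
    exact ⟨_, f.mem_graph w, g.mem_graph ⟨_, hwg⟩⟩
  · rintro ⟨y, hxy, hyz⟩
    obtain ⟨x, hx⟩ := (mem_graph_iff' f).1 hxy
    obtain ⟨y, hy⟩ := (mem_graph_iff' g).1 hyz
    simp only [Prod.mk.injEq] at hx hy
    obtain ⟨rfl, rfl⟩ := hx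
    obtain ⟨hy, rfl⟩ := hy
    have hx : f x ∈ g.domain := hy ▸ y.2
    exact (mem_graph_iff _).2 ⟨⟨x, ⟨x, hx, rfl⟩, x.2⟩, rfl, congrArg g (Subtype.ext hy.symm)⟩

omit [CompleteSpace H] in
theorem mem_graph_iff_of_pcomp_eq {g₁ g₂ f : H →ₗ.[ℂ] H} (h : g₁.pcomp f = g₂.pcomp f)
    {x y z : H} (hxy : (x, y) ∈ f.graph) : (y, z) ∈ g₁.graph ↔ (y, z) ∈ g₂.graph := by
  have key : ∀ {g g' : H →ₗ.[ℂ] H}, g.pcomp f = g'.pcomp f → (y, z) ∈ g.graph →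
      (y, z) ∈ g'.graph := by
    intro g g' hg hyz
    have hxz : (x, z) ∈ (g'.pcomp f).graph := hg ▸ mem_graph_pcomp_iff.2 ⟨y, hxy, hyz⟩
    obtain ⟨y', hxy', hyz'⟩ := mem_graph_pcomp_iff.1 hxz
    rwa [f.mem_graph_snd_inj hxy hxy' rfl]
  exact ⟨key h, key h.symm⟩

variable {𝕜 E : Type*} [RCLike 𝕜] [NormedAddCommGroup E] [InnerProductSpace 𝕜 E]
  [CompleteSpace E] {T : E →ₗ.[𝕜] E}

theorem mem_adjoint_graph_iff (hT : Dense (T.domain : Set E)) {q : E × E} :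
    q ∈ T†.graph ↔ ∀ p ∈ T.graph, ⟪p.2, q.1⟫_𝕜 = ⟪p.1, q.2⟫_𝕜 := by
  simp only [adjoint_graph_eq_graph_adjoint hT, Submodule.mem_adjoint_iff, sub_eq_zero,
    Prod.forall]

theorem exists_mem_graph_mem_adjoint_graph (hT : Dense (T.domain : Set E)) (hc : T.IsClosed)
    (b : E) : ∃ x y, (x, y) ∈ T.graph ∧ (y, b - x) ∈ T†.graph := by
  -- Split `(b, 0)` along the graph of `T` and its orthogonal complement in `E ⊕ E`.
  let G : Submodule 𝕜 (WithLp 2 (E × E)) :=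
    T.graph.comap (WithLp.linearEquiv 2 𝕜 (E × E)).toLinearMap
  have : CompleteSpace G :=
    (hc.preimage (WithLp.prod_continuous_ofLp 2 E E)).completeSpace_coe
  obtain ⟨u, hu, v, hv, hsum⟩ := G.exists_add_mem_mem_orthogonal (WithLp.toLp 2 (b, 0))
  refine ⟨(WithLp.ofLp u).1, (WithLp.ofLp u).2, hu, (mem_adjoint_graph_iff hT).2 fun p hp => ?_⟩
  have hp' := (Submodule.mem_orthogonal G v).1 hv (WithLp.toLp 2 p) hp
  rw [eq_sub_of_add_eq' hsum.symm] at hp'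
  simp only [WithLp.prod_inner_apply, inner_sub_right, inner_zero_right] at hp'
  simp only [inner_sub_right]
  linear_combination -hp'

theorem norm_le_of_mem_graph_of_mem_adjoint_graph (hT : Dense (T.domain : Set E)) {x y b : E}
    (hxy : (x, y) ∈ T.graph) (hyx : (y, b - x) ∈ T†.graph) : ‖x‖ ≤ ‖b‖ ∧ ‖y‖ ≤ ‖b‖ := by
  have h : ⟪y, y⟫_𝕜 = ⟪x, b - x⟫_𝕜 := (mem_adjoint_graph_iff hT).1 hyx _ hxy
  apply_fun RCLike.re at h
  rw [inner_sub_right, AddMonoidHom.map_sub, inner_self_eq_norm_sq, inner_self_eq_norm_sq] at h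
  have hle : ‖x‖ ^ 2 + ‖y‖ ^ 2 ≤ ‖x‖ * ‖b‖ :=
    calc ‖x‖ ^ 2 + ‖y‖ ^ 2 = RCLike.re ⟪x, b⟫_𝕜 := by linarith
      _ ≤ ‖x‖ * ‖b‖ := (RCLike.re_le_norm _).trans (norm_inner_le_norm x b)
  constructor <;>
    nlinarith [sq_nonneg (2 * ‖x‖ - ‖b‖), norm_nonneg x, norm_nonneg y, norm_nonneg b]

theorem eq_of_mem_graph_of_mem_adjoint_graph (hT : Dense (T.domain : Set E)) {x y x' y' b : E}
    (hxy : (x, y) ∈ T.graph) (hyx : (y, b - x) ∈ T†.graph)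
    (hxy' : (x', y') ∈ T.graph) (hyx' : (y', b - x') ∈ T†.graph) : x = x' ∧ y = y' := by
  have h := norm_le_of_mem_graph_of_mem_adjoint_graph hT (x := x - x') (y := y - y') (b := 0)
    (sub_mem hxy hxy') (by convert sub_mem hyx hyx' using 1; ext <;> simp)
  simpa only [norm_zero, norm_le_zero_iff, sub_eq_zero] using h

/-- `B = (1 + T†T)⁻¹` and `C = T B`, recorded through graphs. -/
structure IsResolventPair (T : E →ₗ.[𝕜] E) (B C : E →L[𝕜] E) : Prop where
  mem_graph (b : E) : (B b, C b) ∈ T.graph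
  mem_adjoint_graph (b : E) : (C b, b - B b) ∈ T†.graph

theorem exists_isResolventPair (hT : Dense (T.domain : Set E)) (hc : T.IsClosed) :
    ∃ B C : E →L[𝕜] E, IsResolventPair T B C := by
  choose x y hxy hyx using exists_mem_graph_mem_adjoint_graph hT hc
  have hnorm b := norm_le_of_mem_graph_of_mem_adjoint_graph hT (hxy b) (hyx b)
  have unique {b x' y'} (h₁ : (x', y') ∈ T.graph) (h₂ : (y', b - x') ∈ T†.graph) :=
    eq_of_mem_graph_of_mem_adjoint_graph hT h₁ h₂ (hxy b) (hyx b)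
  have hadd (a b : E) : x a + x b = x (a + b) ∧ y a + y b = y (a + b) :=
    unique (add_mem (hxy a) (hxy b))
      (by rw [add_sub_add_comm]; exact add_mem (hyx a) (hyx b))
  have hsmul (c : 𝕜) (b : E) : c • x b = x (c • b) ∧ c • y b = y (c • b) :=
    unique (Submodule.smul_mem _ c (hxy b))
      (by rw [← smul_sub]; exact Submodule.smul_mem _ c (hyx b))
  let X : E →ₗ[𝕜] E := ⟨⟨x, fun a b => (hadd a b).1.symm⟩, fun c b => (hsmul c b).1.symm⟩
  let Y : E →ₗ[𝕜] E := ⟨⟨y, fun a b => (hadd a b).2.symm⟩, fun c b => (hsmul c b).2.symm⟩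
  exact ⟨X.mkContinuous 1 fun b => by simpa [X] using (hnorm b).1,
    Y.mkContinuous 1 fun b => by simpa [Y] using (hnorm b).2, hxy, hyx⟩

/-- The graph form of `T† T = T T`. -/
def AdjointAgreesOnRange (T : E →ₗ.[𝕜] E) : Prop :=
  ∀ {x y z : E}, (x, y) ∈ T.graph → ((y, z) ∈ T†.graph ↔ (y, z) ∈ T.graph)

namespace IsResolventPair

variable {B C : E →L[𝕜] E}

theorem eq_star_mul_self_add (hBC : IsResolventPair T B C) (hT : Dense (T.domain : Set E)) :
    B = star B * B + star C * C := by
  refine ContinuousLinearMap.ext fun k => ext_inner_right 𝕜 fun h => ?_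
  have := (mem_adjoint_graph_iff hT).1 (hBC.mem_adjoint_graph h) _ (hBC.mem_graph k)
  simp only [_root_.add_apply, mul_apply_eq_comp, ContinuousLinearMap.star_eq_adjoint,
    ContinuousLinearMap.adjoint_inner_left, inner_add_left, inner_sub_right] at this ⊢
  linear_combination -this

theorem mem_graph_sub (hBC : IsResolventPair T B C) (hsq : AdjointAgreesOnRange T) (b : E) :
    (C b, b - B b) ∈ T.graph :=
  (hsq (hBC.mem_graph b)).1 (hBC.mem_adjoint_graph b)

theorem apply_eq_of_mem_graph (hBC : IsResolventPair T B C) (hT : Dense (T.domain : Set E))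
    (hsq : AdjointAgreesOnRange T) {x y : E} (hxy : (x, y) ∈ T.graph) : C x = B y :=
  (eq_of_mem_graph_of_mem_adjoint_graph hT (hBC.mem_graph_sub hsq x)
    ((hsq (hBC.mem_graph_sub hsq x)).2 (sub_mem hxy (hBC.mem_graph x)))
    (hBC.mem_graph y) (hBC.mem_adjoint_graph y)).1

theorem commute (hBC : IsResolventPair T B C) (hT : Dense (T.domain : Set E))
    (hsq : AdjointAgreesOnRange T) : Commute B C :=
  ContinuousLinearMap.ext fun k => (hBC.apply_eq_of_mem_graph hT hsq (hBC.mem_graph k)).symm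

theorem sub_star_mul_eq (hBC : IsResolventPair T B C) (hT : Dense (T.domain : Set E))
    (hsq : AdjointAgreesOnRange T) : C - star B * C = star C - star C * B := by
  refine ContinuousLinearMap.ext fun k => ext_inner_right 𝕜 fun h => ?_
  have := (mem_adjoint_graph_iff hT).1 (hBC.mem_adjoint_graph h) _ (hBC.mem_graph_sub hsq k)
  simp only [_root_.sub_apply, mul_apply_eq_comp, ContinuousLinearMap.star_eq_adjoint,
    ContinuousLinearMap.adjoint_inner_left, inner_sub_left, inner_sub_right] at this ⊢
  linear_combination -this

theorem isSelfAdjoint_left (hBC : IsResolventPair T B C) (hT : Dense (T.domain : Set E)) :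
    IsSelfAdjoint B :=
  .of_eq_star_mul_self_add (hBC.eq_star_mul_self_add hT)

theorem isSelfAdjoint_right (hBC : IsResolventPair T B C) (hT : Dense (T.domain : Set E))
    (hsq : AdjointAgreesOnRange T) : IsSelfAdjoint C :=
  isSelfAdjoint_of_eq_star_mul_self_add_of_commute (hBC.eq_star_mul_self_add hT)
    (hBC.commute hT hsq) (hBC.sub_star_mul_eq hT hsq)

theorem mem_adjoint_graph_apply (hBC : IsResolventPair T B C) (hT : Dense (T.domain : Set E))
    (hsq : AdjointAgreesOnRange T) (b : E) : (B b, C b) ∈ T†.graph := by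
  refine (mem_adjoint_graph_iff hT).2 fun p hp => ?_
  calc ⟪p.2, B b⟫_𝕜 = ⟪B p.2, b⟫_𝕜 := ((hBC.isSelfAdjoint_left hT).isSymmetric p.2 b).symm
    _ = ⟪C p.1, b⟫_𝕜 := by rw [hBC.apply_eq_of_mem_graph hT hsq hp]
    _ = ⟪p.1, C b⟫_𝕜 := (hBC.isSelfAdjoint_right hT hsq).isSymmetric p.1 b

theorem le_adjoint (hBC : IsResolventPair T B C) (hT : Dense (T.domain : Set E))
    (hsq : AdjointAgreesOnRange T) : T ≤ T† := by
  refine le_of_le_graph fun p hp => ?_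
  have h : (p.1 - B p.1, p.2 - C p.1) ∈ T†.graph :=
    (hsq (hBC.mem_graph_sub hsq p.1)).2 (sub_mem hp (hBC.mem_graph p.1))
  simpa using add_mem (hBC.mem_adjoint_graph_apply hT hsq p.1) h

theorem adjoint_le (hBC : IsResolventPair T B C) (hT : Dense (T.domain : Set E))
    (hsq : AdjointAgreesOnRange T) : T† ≤ T := by
  refine le_of_le_graph fun q hq => ?_
  have hB := (hBC.isSelfAdjoint_left hT).isSymmetric
  have hC := (hBC.isSelfAdjoint_right hT hsq).isSymmetric
  have hq := (mem_adjoint_graph_iff hT).1 hq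
  have h₁ : C q.1 = B q.2 := ext_inner_left 𝕜 fun v =>
    calc ⟪v, C q.1⟫_𝕜 = ⟪C v, q.1⟫_𝕜 := (hC v q.1).symm
      _ = ⟪B v, q.2⟫_𝕜 := hq _ (hBC.mem_graph v)
      _ = ⟪v, B q.2⟫_𝕜 := hB v q.2
  have h₂ : q.1 - B q.1 = C q.2 := ext_inner_left 𝕜 fun v =>
    calc ⟪v, q.1 - B q.1⟫_𝕜 = ⟪v - B v, q.1⟫_𝕜 := by
          rw [inner_sub_right, inner_sub_left]; congr 1; exact (hB v q.1).symm
      _ = ⟪C v, q.2⟫_𝕜 := hq _ (hBC.mem_graph_sub hsq v)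
      _ = ⟪v, C q.2⟫_𝕜 := hC v q.2
  convert add_mem (hBC.mem_graph q.1) (hBC.mem_graph_sub hsq q.2) using 1
  ext
  · simp [← h₂]
  · simp [h₁]

end IsResolventPair

end LinearPMap

theorem stmt17 (A : H →ₗ.[ℂ] H) (hdense : Dense (A.domain : Set H)) (hclosed : A.IsClosed)
    (h : A.adjoint.pcomp A = A.pcomp A) : IsSelfAdjoint A := by
  obtain ⟨B, C, hBC⟩ := exists_isResolventPair hdense hclosed
  have hsq : AdjointAgreesOnRange A := mem_graph_iff_of_pcomp_eq h
  exact le_antisymm (hBC.adjoint_le hdense hsq) (hBC.le_adjoint hdense hsq)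
end

section
/- Let A be a closed, densely defined operator on a complex Hilbert space H and n ≥ 3 an integer such that A*A = Aⁿ (equality of operators including domains). Then A is everywhere defined and bounded, i.e., A ∈ B(H). -/
open LinearPMap

variable {H : Type*} [NormedAddCommGroup H] [InnerProductSpace ℂ H] [CompleteSpace H]

/-- The `n`-th power of a partially defined operator, with its natural domain. -/
noncomputable def LinearPMap.ppow (A : H →ₗ.[ℂ] H) : ℕ → H →ₗ.[ℂ] H
  | 0 => (LinearMap.id : H →ₗ[ℂ] H).toPMap ⊤
  | n + 1 => A.pcomp (A.ppow n)

/-!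
Let `R = (1 + A†A)⁻¹` and `B = A R`; both are bounded because `A` is closed and densely defined,
and `B†B = R (1 - R)` with `R` self-adjoint and injective. Since `A†A = Aⁿ`, the operator `A`
commutes with `R`, so `B` commutes with `R` and `Bⁿ = Aⁿ Rⁿ = (1 - R) Rⁿ⁻¹`. Comparing
`(Bⁿ)† Bⁿ = (B†B)ⁿ` gives `Rⁿ (1 - R)ⁿ = (Rⁿ⁻¹ (1 - R))²`, and cancelling the injective `Rⁿ`
leaves a polynomial relation for `R` with constant term `1` as soon as `n ≥ 3`. Hence `R` is
invertible, `D(A) ⊇ range R = H`, and `A = B R⁻¹`.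
-/

open Polynomial in
theorem isUnit_of_aeval_eq_zero_of_coeff_zero_eq_one {K M : Type*} [CommRing K] [Ring M]
    [Algebra K M] {r : M} {q : K[X]} (hq : aeval r q = 0) (h0 : q.coeff 0 = 1) : IsUnit r := by
  obtain ⟨s, hs⟩ := X_dvd_sub_C (p := q)
  have hs' : q - C (q.coeff 0) = s * X := by rw [hs, mul_comm]
  rw [h0, map_one] at hs hs'
  have hr := congrArg (aeval r) hs
  have hr' := congrArg (aeval r) hs'
  simp only [_root_.map_sub, map_mul, map_one, hq, aeval_X, zero_sub] at hr hr'
  exact ⟨⟨r, -aeval r s, by rw [mul_neg, ← hr, neg_neg], by rw [neg_mul, ← hr', neg_neg]⟩, rfl⟩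

open Polynomial in
theorem isUnit_of_mul_one_sub_pow_eq {M : Type*} [Ring M] {r : M} (hr : IsLeftRegular r)
    {n : ℕ} (hn : 3 ≤ n) (h : (r * (1 - r)) ^ n = (r ^ (n - 1) * (1 - r)) ^ 2) : IsUnit r := by
  obtain ⟨m, rfl⟩ : ∃ m, n = m + 3 := ⟨n - 3, by omega⟩
  let q : ℤ[X] := (1 - X) ^ (m + 3) - X ^ (m + 1) * (1 - X) ^ 2
  have hXq : X ^ (m + 3) * q = (X * (1 - X)) ^ (m + 3) - (X ^ (m + 2) * (1 - X)) ^ 2 := by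
    rw [mul_pow]
    ring
  refine isUnit_of_aeval_eq_zero_of_coeff_zero_eq_one (q := q) (hr.pow (m + 3) ?_) ?_
  · change r ^ (m + 3) * aeval r q = r ^ (m + 3) * 0
    rw [mul_zero, ← aeval_X_pow (R := ℤ), ← map_mul, hXq]
    simpa [sub_eq_zero] using h
  · simp [q, coeff_zero_eq_eval_zero]

theorem star_pow_mul_pow_of_commute {M : Type*} [Monoid M] [StarMul M] {b : M}
    (h : Commute (star b * b) b) (k : ℕ) : star (b ^ k) * b ^ k = (star b * b) ^ k := by
  induction k with
  | zero => simp
  | succ k ih =>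
    calc star (b ^ (k + 1)) * b ^ (k + 1) = star b * (star (b ^ k) * b ^ k) * b := by
          rw [pow_succ, star_mul]; simp only [mul_assoc]
      _ = star b * b * (star b * b) ^ k := by rw [ih, mul_assoc, (h.pow_left k).eq, mul_assoc]
      _ = (star b * b) ^ (k + 1) := (pow_succ' _ k).symm

theorem Submodule.exists_eq_graph_continuousLinearMap {𝕜 E F : Type*}
    [NontriviallyNormedField 𝕜] [SeminormedAddCommGroup E] [NormedAddCommGroup F]
    [NormedSpace 𝕜 E] [NormedSpace 𝕜 F] (S : Submodule 𝕜 (E × F)) (hS : ∀ e, ∃ f, (e, f) ∈ S)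
    (C : ℝ) (hC : ∀ e f, (e, f) ∈ S → ‖f‖ ≤ C * ‖e‖) :
    ∃ L : E →L[𝕜] F, S = LinearMap.graph (L : E →ₗ[𝕜] F) := by
  choose L hL using hS
  have eq_L {e f} (hef : (e, f) ∈ S) : f = L e := by
    have h0 : ‖f - L e‖ ≤ 0 := by simpa using hC _ _ (S.sub_mem hef (hL e))
    exact sub_eq_zero.mp (norm_le_zero_iff.mp h0)
  let L' : E →ₗ[𝕜] F :=
    { toFun := L
      map_add' := fun a b => (eq_L (S.add_mem (hL a) (hL b))).symm
      map_smul' := fun c a => (eq_L (S.smul_mem c (hL a))).symm }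
  refine ⟨L'.mkContinuous C fun e => hC e _ (hL e), ?_⟩
  ext ⟨e, f⟩
  exact ⟨eq_L, fun h => (show f = L e from h) ▸ hL e⟩

theorem LinearPMap.eq_toPMap_top_of_forall_mem_graph {R E F : Type*} [Ring R] [AddCommGroup E]
    [Module R E] [AddCommGroup F] [Module R F] {f : E →ₗ.[R] F} {g : E →ₗ[R] F}
    (h : ∀ x, (x, g x) ∈ f.graph) : f = g.toPMap ⊤ := by
  refine LinearPMap.ext ?_ fun x hx _ => ?_
  · exact Submodule.eq_top_iff'.mpr fun x => mem_domain_of_mem_graph (h x)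
  · exact f.mem_graph_snd_inj (f.mem_graph ⟨x, hx⟩) (h x) rfl

local notation "⟪" x ", " y "⟫" => @inner ℂ _ _ x y

namespace LinearPMap

section Powers

omit [CompleteSpace H]

variable {A g f : H →ₗ.[ℂ] H} {x y : H}

theorem mem_domain_pcomp : x ∈ (g.pcomp f).domain ↔ ∃ hx : x ∈ f.domain, f ⟨x, hx⟩ ∈ g.domain := by
  constructor
  · rintro ⟨⟨y, hy, rfl⟩, hx⟩
    exact ⟨hx, hy⟩
  · rintro ⟨hx, hfx⟩
    exact ⟨⟨⟨x, hx⟩, hfx, rfl⟩, hx⟩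

theorem pcomp_apply (hx : x ∈ (g.pcomp f).domain) :
    g.pcomp f ⟨x, hx⟩ = g ⟨f ⟨x, (mem_domain_pcomp.mp hx).1⟩, (mem_domain_pcomp.mp hx).2⟩ :=
  rfl

theorem mem_graph_pcomp :
    (x, y) ∈ (g.pcomp f).graph ↔ ∃ z, (x, z) ∈ f.graph ∧ (z, y) ∈ g.graph := by
  constructor
  · intro h
    have hx := mem_domain_of_mem_graph h
    obtain ⟨hxf, hfg⟩ := mem_domain_pcomp.mp hx
    refine ⟨_, f.mem_graph ⟨x, hxf⟩, ?_⟩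
    rw [← image_iff hfg, ← pcomp_apply hx]
    exact (image_iff hx).mpr h
  · rintro ⟨z, hxz, hzy⟩
    have hxf := mem_domain_of_mem_graph hxz
    obtain rfl := (image_iff hxf).mpr hxz
    have hx : x ∈ (g.pcomp f).domain := mem_domain_pcomp.mpr ⟨hxf, mem_domain_of_mem_graph hzy⟩
    rw [← image_iff hx, pcomp_apply hx]
    exact (image_iff _).mpr hzy

theorem mem_graph_ppow_zero : (x, y) ∈ (A.ppow 0).graph ↔ x = y := by
  simp [ppow]

theorem mem_graph_ppow_succ {k : ℕ} :
    (x, y) ∈ (A.ppow (k + 1)).graph ↔ ∃ z, (x, z) ∈ (A.ppow k).graph ∧ (z, y) ∈ A.graph :=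
  mem_graph_pcomp

theorem mem_graph_ppow_succ' {k : ℕ} :
    (x, y) ∈ (A.ppow (k + 1)).graph ↔ ∃ z, (x, z) ∈ A.graph ∧ (z, y) ∈ (A.ppow k).graph := by
  induction k generalizing y with
  | zero =>
    rw [mem_graph_ppow_succ]
    simp only [mem_graph_ppow_zero]
    aesop
  | succ k ih =>
    rw [mem_graph_ppow_succ]
    simp only [ih, mem_graph_ppow_succ]
    aesop

end Powers

variable {A : H →ₗ.[ℂ] H}

theorem mem_adjoint_graph_iff_s19 (hdense : Dense (A.domain : Set H)) {y w : H} :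
    (y, w) ∈ A.adjoint.graph ↔ ∀ a b, (a, b) ∈ A.graph → ⟪b, y⟫ = ⟪a, w⟫ := by
  simp only [adjoint_graph_eq_graph_adjoint hdense, Submodule.mem_adjoint_iff, sub_eq_zero]

noncomputable def resolventGraph (A : H →ₗ.[ℂ] H) : Submodule ℂ (H × H × H) :=
  A.graph.comap (LinearMap.snd ℂ H (H × H)) ⊓
    A.adjoint.graph.comap (((LinearMap.snd ℂ H H).comp (LinearMap.snd ℂ H (H × H))).prod
      (LinearMap.fst ℂ H (H × H) - (LinearMap.fst ℂ H H).comp (LinearMap.snd ℂ H (H × H))))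

theorem mem_resolventGraph {h x y : H} :
    (h, x, y) ∈ A.resolventGraph ↔ (x, y) ∈ A.graph ∧ (y, h - x) ∈ A.adjoint.graph :=
  Iff.rfl

theorem norm_le_of_mem_resolventGraph (hdense : Dense (A.domain : Set H)) {h x y : H}
    (hp : (h, x, y) ∈ A.resolventGraph) : ‖(x, y)‖ ≤ ‖h‖ := by
  obtain ⟨hxy, hyx⟩ := mem_resolventGraph.mp hp
  have hinner : ⟪y, y⟫ = ⟪x, h - x⟫ := (mem_adjoint_graph_iff_s19 hdense).mp hyx x y hxy
  have hre : ‖x‖ ^ 2 + ‖y‖ ^ 2 ≤ ‖x‖ * ‖h‖ := by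
    have hre := congrArg RCLike.re hinner
    rw [inner_sub_right, _root_.map_sub, inner_self_eq_norm_sq, inner_self_eq_norm_sq] at hre
    linarith [re_inner_le_norm (𝕜 := ℂ) x h]
  have hx : ‖x‖ ≤ ‖h‖ := by nlinarith [norm_nonneg x, norm_nonneg y, norm_nonneg h]
  have hy : ‖y‖ ≤ ‖h‖ := by
    nlinarith [norm_nonneg y, norm_nonneg h, mul_le_mul_of_nonneg_right hx (norm_nonneg h)]
  exact max_le hx hy

theorem exists_mem_resolventGraph (hdense : Dense (A.domain : Set H)) (hclosed : A.IsClosed)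
    (h : H) : ∃ p : H × H, (h, p) ∈ A.resolventGraph := by
  let G : Submodule ℂ (WithLp 2 (H × H)) :=
    A.graph.comap (WithLp.linearEquiv 2 ℂ (H × H)).toLinearMap
  have : CompleteSpace G :=
    (hclosed.preimage (WithLp.prod_continuous_ofLp 2 H H)).completeSpace_coe
  -- `(h, 0) = p + q` with `p ∈ graph A`; that `q = (h - p.1, -p.2)` is orthogonal to
  -- `graph A` says exactly that `(p.2, h - p.1) ∈ graph A†`
  obtain ⟨p, hp, q, hq, hpq⟩ := G.exists_add_mem_mem_orthogonal (WithLp.toLp 2 (h, 0))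
  refine ⟨(p.fst, p.snd), mem_resolventGraph.mpr
    ⟨hp, (mem_adjoint_graph_iff_s19 hdense).mpr fun a b hab => ?_⟩⟩
  have hq0 := (Submodule.mem_orthogonal G q).mp hq (WithLp.toLp 2 (a, b)) hab
  rw [eq_sub_of_add_eq' hpq.symm, WithLp.prod_inner_apply] at hq0
  simp only [WithLp.ofLp_sub, Prod.fst_sub, WithLp.ofLp_fst, Prod.snd_sub, WithLp.ofLp_snd,
    zero_sub, inner_neg_right] at hq0
  linear_combination -hq0

/-- `R = (1 + A†A)⁻¹` and `B = A (1 + A†A)⁻¹`. -/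
def IsResolventPair_s19 (A : H →ₗ.[ℂ] H) (R B : H →L[ℂ] H) : Prop :=
  ∀ h x y, (h, x, y) ∈ A.resolventGraph ↔ x = R h ∧ y = B h

theorem exists_isResolventPair_s19 (hdense : Dense (A.domain : Set H)) (hclosed : A.IsClosed) :
    ∃ R B : H →L[ℂ] H, A.IsResolventPair_s19 R B := by
  obtain ⟨L, hL⟩ := A.resolventGraph.exists_eq_graph_continuousLinearMap
    (exists_mem_resolventGraph hdense hclosed) 1
    (fun h _ hp => (one_mul ‖h‖).symm ▸ norm_le_of_mem_resolventGraph hdense hp)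
  refine ⟨(ContinuousLinearMap.fst ℂ H H).comp L, (ContinuousLinearMap.snd ℂ H H).comp L,
    fun h x y => ?_⟩
  rw [hL, LinearMap.mem_graph_iff, Prod.ext_iff]
  rfl

namespace IsResolventPair_s19

variable {R B : H →L[ℂ] H} (hRB : A.IsResolventPair_s19 R B)
include hRB

theorem mem_graph (v : H) : (R v, B v) ∈ A.graph :=
  ((hRB v _ _).mpr ⟨rfl, rfl⟩).1

theorem mem_adjoint_graph (v : H) : (B v, v - R v) ∈ A.adjoint.graph :=
  ((hRB v _ _).mpr ⟨rfl, rfl⟩).2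

theorem injective : Function.Injective R := by
  refine (injective_iff_map_eq_zero R).mpr fun v hv => ?_
  have hB : B v = 0 := A.graph_fst_eq_zero_snd (hRB.mem_graph v) hv
  have := A.adjoint.graph_fst_eq_zero_snd (hRB.mem_adjoint_graph v) hB
  rwa [hv, sub_zero] at this

theorem inner_eq (hdense : Dense (A.domain : Set H)) (v w : H) :
    ⟪B v, B w⟫ = ⟪v - R v, R w⟫ := by
  rw [← inner_conj_symm, (mem_adjoint_graph_iff_s19 hdense).mp (hRB.mem_adjoint_graph v) _ _
    (hRB.mem_graph w), inner_conj_symm]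

theorem adjoint_mul_self (hdense : Dense (A.domain : Set H)) :
    ContinuousLinearMap.adjoint B * B = ContinuousLinearMap.adjoint R * (1 - R) := by
  ext v
  refine ext_inner_right ℂ fun w => ?_
  change ⟪ContinuousLinearMap.adjoint B (B v), w⟫ = ⟪ContinuousLinearMap.adjoint R ((1 - R) v), w⟫
  rw [ContinuousLinearMap.adjoint_inner_left, ContinuousLinearMap.adjoint_inner_left]
  exact hRB.inner_eq hdense v w

theorem isSelfAdjoint (hdense : Dense (A.domain : Set H)) : IsSelfAdjoint R := by
  have h : star B * B = star R * (1 - R) := hRB.adjoint_mul_self hdense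
  have h' := (IsSelfAdjoint.star_mul_self B).star_eq
  rw [h, star_mul, star_sub, star_one, star_star, sub_mul, mul_sub, one_mul, mul_one,
    sub_left_inj] at h'
  exact h'.symm

variable {n : ℕ} (hT : A.adjoint.pcomp A = A.ppow n)
include hT

theorem mem_graph_ppow (v : H) : (R v, v - R v) ∈ (A.ppow n).graph :=
  hT ▸ mem_graph_pcomp.mpr ⟨B v, hRB.mem_graph v, hRB.mem_adjoint_graph v⟩

theorem apply_add_eq {z w : H} (hzw : (z, w) ∈ (A.ppow n).graph) : R (z + w) = z := by
  obtain ⟨y, hzy, hyw⟩ := mem_graph_pcomp.mp (hT ▸ hzw)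
  refine ((hRB (z + w) z y).mp (mem_resolventGraph.mpr ⟨hzy, ?_⟩)).1.symm
  rwa [add_sub_cancel_left]

theorem mem_graph_of_mem_graph (hn : n ≠ 0) {x y : H} (hxy : (x, y) ∈ A.graph) :
    (R x, R y) ∈ A.graph := by
  obtain ⟨m, rfl⟩ := Nat.exists_eq_succ_of_ne_zero hn
  obtain ⟨z, hRxz, hz⟩ := mem_graph_ppow_succ'.mp (hRB.mem_graph_ppow hT x)
  -- `Aⁿ z = A (Aⁿ⁻¹ z) = A (x - R x) = y - z`, so `R y = R (z + Aⁿ z) = z`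
  have hyz : (z, y - z) ∈ (A.ppow (m + 1)).graph :=
    mem_graph_ppow_succ.mpr ⟨x - R x, hz, A.graph.sub_mem hxy hRxz⟩
  have hRy : R y = z := by simpa using hRB.apply_add_eq hT hyz
  rwa [hRy]

theorem commute_s19 (hn : n ≠ 0) : Commute R B := by
  ext v
  exact A.mem_graph_snd_inj (hRB.mem_graph_of_mem_graph hT hn (hRB.mem_graph v))
    (hRB.mem_graph (R v)) rfl

theorem pow_mem_graph_ppow (hn : n ≠ 0) (k : ℕ) (v : H) :
    ((R ^ k) v, (B ^ k) v) ∈ (A.ppow k).graph := by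
  induction k generalizing v with
  | zero => exact mem_graph_ppow_zero.mpr rfl
  | succ k ih =>
    have hBR : (B ^ k) (R v) = R ((B ^ k) v) :=
      congrArg (· v) ((hRB.commute_s19 hT hn).symm.pow_left k).eq
    refine mem_graph_ppow_succ.mpr ⟨(B ^ k) (R v), ?_, ?_⟩
    · rw [pow_succ]
      exact ih (R v)
    · rw [hBR, pow_succ']
      exact hRB.mem_graph _

theorem pow_eq (hn : n ≠ 0) : B ^ n = (1 - R) * R ^ (n - 1) := by
  have hRn : R ^ n = R * R ^ (n - 1) := by
    rw [← pow_succ', Nat.sub_add_cancel (Nat.pos_of_ne_zero hn)]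
  ext v
  exact (A.ppow n).mem_graph_snd_inj (hRB.pow_mem_graph_ppow hT hn n v)
    (hRB.mem_graph_ppow hT ((R ^ (n - 1)) v)) (by rw [hRn]; rfl)

theorem mul_one_sub_pow_eq (hdense : Dense (A.domain : Set H)) (hn : n ≠ 0) :
    (R * (1 - R)) ^ n = (R ^ (n - 1) * (1 - R)) ^ 2 := by
  have hR := hRB.isSelfAdjoint hdense
  have hB : star B * B = R * (1 - R) := (hRB.adjoint_mul_self hdense).trans
    (by rw [← ContinuousLinearMap.star_eq_adjoint, hR.star_eq])
  have hcomm := hRB.commute_s19 hT hn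
  have hBB : Commute (star B * B) B := hB ▸ hcomm.mul_left ((Commute.one_left B).sub_left hcomm)
  have hR' : Commute (1 - R) (R ^ (n - 1)) :=
    ((Commute.one_left R).sub_left (Commute.refl R)).pow_right _
  calc (R * (1 - R)) ^ n = star (B ^ n) * B ^ n := by rw [star_pow_mul_pow_of_commute hBB, hB]
    _ = (R ^ (n - 1) * (1 - R)) ^ 2 := by
      rw [hRB.pow_eq hT hn, star_mul, (hR.pow _).star_eq, star_sub, star_one, hR.star_eq, sq,
        hR'.eq]

end IsResolventPair_s19

end LinearPMap

theorem stmt19 (A : H →ₗ.[ℂ] H) (hdense : Dense (A.domain : Set H)) (hclosed : A.IsClosed)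
    (n : ℕ) (hn : 3 ≤ n) (h : A.adjoint.pcomp A = A.ppow n) :
    ∃ B : H →L[ℂ] H, A = (B : H →ₗ[ℂ] H).toPMap ⊤ := by
  obtain ⟨R, B, hRB⟩ := exists_isResolventPair_s19 hdense hclosed
  have hRreg : IsLeftRegular R := fun S T hST =>
    ContinuousLinearMap.ext fun v => hRB.injective (congrArg (· v) hST)
  have hR : IsUnit R :=
    isUnit_of_mul_one_sub_pow_eq hRreg hn (hRB.mul_one_sub_pow_eq h hdense (by omega))
  set S : H →L[ℂ] H := ↑hR.unit⁻¹
  refine ⟨B * S, eq_toPMap_top_of_forall_mem_graph fun x => ?_⟩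
  have hx : R (S x) = x := congrArg (· x) hR.mul_val_inv
  simpa [hx] using hRB.mem_graph (S x)
end
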